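/- Fix $\gamma \in (0,1)$, $\epsilon \in (0,1)$, $C > 1$ with $Cp \le 1 - \epsilon$ for some $p > 0$. Define $C_1 = C$ and $C_{j+1} = C_j(1 + \gamma(1-\gamma)^{j-1}\epsilon)$ for $j \ge 1$. Then for all $j \ge 1$, $1 - C_j p \ge (1 - Cp)(1-\gamma)^{j-1}$. -/

import Mathlib

/-!
Write `x_j = C_j p` and `a_j = (1-γ)^(j-1)`, so that `1 - x_{j+1} = (1 - x_j) - γ a_j ε x_j`.
If `1 - x_j ≥ (1 - Cp) a_j`, then in particular `x_j ≤ 1`, hence `ε x_j ≤ ε ≤ 1 - Cp`, and the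
loss `γ a_j ε x_j` is at most `γ a_j (1 - Cp)`; this is exactly what turns the factor `a_j`
into `a_j (1-γ)`.
-/

lemma one_sub_mul_one_add_ge {γ ε x₀ x a : ℝ} (hγ : 0 ≤ γ) (hε : 0 ≤ ε) (hx₀ : x₀ ≤ 1 - ε)
    (ha : 0 ≤ a) (hx : (1 - x₀) * a ≤ 1 - x) :
    (1 - x₀) * (a * (1 - γ)) ≤ 1 - x * (1 + γ * a * ε) := by
  have hx_le_one : x ≤ 1 := by nlinarith
  have hεx : x * ε ≤ 1 - x₀ := by nlinarith
  have hγa : 0 ≤ γ * a := mul_nonneg hγ ha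
  calc (1 - x₀) * (a * (1 - γ)) = (1 - x₀) * a - γ * a * (1 - x₀) := by ring
    _ ≤ (1 - x) - γ * a * (x * ε) := by gcongr
    _ = 1 - x * (1 + γ * a * ε) := by ring

lemma one_sub_ge_of_eq_mul_one_add {γ ε x₀ : ℝ} (hγ : γ ∈ Set.Icc (0 : ℝ) 1) (hε : 0 ≤ ε)
    (hx₀ : x₀ ≤ 1 - ε) (x : ℕ → ℝ) (h0 : x 0 = x₀)
    (hrec : ∀ n, x (n + 1) = x n * (1 + γ * (1 - γ) ^ n * ε)) (n : ℕ) :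
    (1 - x₀) * (1 - γ) ^ n ≤ 1 - x n := by
  induction n with
  | zero => simp [h0]
  | succ n ih =>
    rw [hrec, pow_succ]
    exact one_sub_mul_one_add_ge hγ.1 hε hx₀ (pow_nonneg (by linarith [hγ.2]) n) ih

theorem stage_constant_lower_bound_general (γ ε C p : ℝ)
    (hγ : γ ∈ Set.Ioo (0 : ℝ) 1) (hε : ε ∈ Set.Ioo (0 : ℝ) 1)
    (hCp : C * p ≤ 1 - ε)
    (Cs : ℕ → ℝ) (h1 : Cs 1 = C)
    (hrec : ∀ j : ℕ, 1 ≤ j → Cs (j + 1) = Cs j * (1 + γ * (1 - γ) ^ (j - 1) * ε)) :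
    ∀ j : ℕ, 1 ≤ j → 1 - Cs j * p ≥ (1 - C * p) * (1 - γ) ^ (j - 1) := by
  intro j hj
  obtain ⟨n, rfl⟩ := Nat.exists_eq_add_of_le' hj
  have hrec' : ∀ n, Cs (n + 1 + 1) * p = Cs (n + 1) * p * (1 + γ * (1 - γ) ^ n * ε) := by
    intro n
    rw [hrec (n + 1) n.succ_pos, Nat.add_sub_cancel]
    ring
  simpa using one_sub_ge_of_eq_mul_one_add (Set.Ioo_subset_Icc_self hγ) hε.1.le hCp
    (fun n ↦ Cs (n + 1) * p) (by rw [h1]) hrec' n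

/-- With `C₁ = C` and `C_{j+1} = C_j (1 + γ(1-γ)^(j-1) ε)`, if `Cp ≤ 1 - ε` then
`1 - C_j p ≥ (1 - Cp)(1-γ)^(j-1)` for all `j ≥ 1`. -/
theorem stage_constant_lower_bound (γ ε C p : ℝ)
    (hγ : γ ∈ Set.Ioo (0 : ℝ) 1) (hε : ε ∈ Set.Ioo (0 : ℝ) 1)
    (hC : 1 < C) (hp : 0 < p) (hCp : C * p ≤ 1 - ε)
    (Cs : ℕ → ℝ) (h1 : Cs 1 = C)
    (hrec : ∀ j : ℕ, 1 ≤ j → Cs (j + 1) = Cs j * (1 + γ * (1 - γ) ^ (j - 1) * ε)) :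
    ∀ j : ℕ, 1 ≤ j → 1 - Cs j * p ≥ (1 - C * p) * (1 - γ) ^ (j - 1) :=
  stage_constant_lower_bound_general γ ε C p hγ hε hCp Cs h1 hrec
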